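/- Let m ≥ 1, n = 32m³ + 16m² + 6m + 1, and let X be the circulant graph X(Z_n; {±1, ±(8m²+2m), ±(8m²+6m+2)}) (the largest known circulant graph of degree 6 and diameter k = 3m, isomorphism class 2). Then the set of type T_1 vertices at distance exactly 2m+1 from 0 is precisely {2m+1, −(2m+1)} (two distinct vertices), and there are no type T_1 vertices at distance l from 0 for any l ≥ 2m+2. -/

import Mathlib

/-- The circulant graph `X(Z_n; {±g 0, …, ±g (f-1)})`: vertices are `ZMod n`, and distinct
`u, v` are adjacent iff `v - u ≡ ±g i (mod n)` for some `i`. -/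
def circulant (n : ℕ) {f : ℕ} (g : Fin f → ℤ) : SimpleGraph (ZMod n) where
  Adj u v := u ≠ v ∧ ∃ i, v - u = (g i : ZMod n) ∨ u - v = (g i : ZMod n)
  symm := by
    constructor
    rintro u v ⟨hne, i, h | h⟩
    · exact ⟨hne.symm, i, Or.inr h⟩
    · exact ⟨hne.symm, i, Or.inl h⟩
  loopless := by constructor; rintro u ⟨hne, -⟩; exact hne rfl

/-! In a circulant graph the distance from `0` to `v` is the least `ℓ¹`-norm of an integer vector
`x` with `v = ∑ xᵢ gᵢ (mod n)`. If a shortest such representation uses two different generators,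
stepping back along either of them gives two distinct parents of `v`, so `v` is not of type `T₁`.

Here `B = 2m(4m+1)`, `C = (2m+1)(4m+1) + 1`, and the relations `C - B = 4m+2` and
`n = 4mB + C - 1 = 4mC - B + 1` turn a shortest representation `±L·g` along a single generator,
`L ≥ 2m+1`, into one of no greater length using two generators, unless `g = 1` and `L = 2m+1`.
For `±(2m+1)` itself, writing `a + bB + cC = (a + c) + (4m+1)(2mb + (2m+1)c)` and comparing
modulo `4m+1` shows that `±(2m+1)·1` is its only representation of norm at most `2m+1`: so it lies
at distance `2m+1` and its only parent is `±2m`. -/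

namespace SimpleGraph

variable {V : Type*} (G : SimpleGraph V)

-- `v` has type `T₁` with respect to the root `r` iff this set has exactly one element.
def parentSet (r v : V) : Set V := {u | G.Adj v u ∧ G.dist r u = G.dist r v - 1}

variable {G}

theorem mem_parentSet_of_adj_of_dist_lt {r u v : V} (hadj : G.Adj v u)
    (hd : G.dist r u < G.dist r v) : u ∈ G.parentSet r v := by
  refine ⟨hadj, ?_⟩
  rcases hadj.symm.diff_dist_adj (u := r) with h | h | h <;> omega

theorem ncard_parentSet_ne_one {r v u₁ u₂ : V} (h₁ : G.Adj v u₁) (h₂ : G.Adj v u₂)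
    (hne : u₁ ≠ u₂) (hd₁ : G.dist r u₁ < G.dist r v) (hd₂ : G.dist r u₂ < G.dist r v) :
    (G.parentSet r v).ncard ≠ 1 := by
  intro h
  obtain ⟨w, hw⟩ := Set.ncard_eq_one.mp h
  have h₁w := mem_parentSet_of_adj_of_dist_lt h₁ hd₁
  have h₂w := mem_parentSet_of_adj_of_dist_lt h₂ hd₂
  rw [hw] at h₁w h₂w
  exact hne (h₁w.trans h₂w.symm)

end SimpleGraph

open SimpleGraph

theorem eq_of_intCast_eq_of_abs_sub_lt {n : ℕ} {a b : ℤ} (h : (a : ZMod n) = b)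
    (hab : |a - b| < n) : a = b :=
  sub_eq_zero.mp <|
    Int.eq_zero_of_abs_lt_dvd ((ZMod.intCast_eq_intCast_iff_dvd_sub _ _ _).mp h.symm) hab

theorem intCast_ne_intCast_of_abs_sub_lt {n : ℕ} {a b : ℤ} (hab : a ≠ b) (h : |a - b| < n) :
    (a : ZMod n) ≠ b :=
  fun h' => hab (eq_of_intCast_eq_of_abs_sub_lt h' h)

theorem Int.exists_eq_mul_of_natAbs_eq {a : ℤ} {L : ℕ} (h : a.natAbs = L) :
    ∃ ε : ℤ, (ε = 1 ∨ ε = -1) ∧ a = ε * L := by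
  rcases Int.natAbs_eq_iff.mp h with rfl | rfl
  exacts [⟨1, Or.inl rfl, (one_mul _).symm⟩, ⟨-1, Or.inr rfl, (neg_one_mul _).symm⟩]

section Circulant

variable {n f : ℕ} {g : Fin f → ℤ}

theorem circulant_adj_sub_mul (hg₀ : ∀ i, (g i : ZMod n) ≠ 0) (v : ZMod n) (i : Fin f)
    {ε : ℤ} (hε : ε = 1 ∨ ε = -1) : (circulant n g).Adj v (v - ((ε * g i : ℤ) : ZMod n)) := by
  rcases hε with rfl | rfl
  · exact ⟨fun h => hg₀ i (by simpa using h.symm), i, Or.inr (by simp)⟩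
  · exact ⟨fun h => hg₀ i (by simpa using h.symm), i, Or.inl (by simp)⟩

theorem circulant_exists_step_of_adj {u w : ZMod n} (h : (circulant n g).Adj u w) :
    ∃ x : Fin f → ℤ, ∑ i, (x i).natAbs = 1 ∧ w = u + ((∑ i, x i * g i : ℤ) : ZMod n) := by
  obtain ⟨-, i, hi | hi⟩ := h
  · refine ⟨Pi.single i 1, by simp [Pi.single_apply, apply_ite], ?_⟩
    simp [Pi.single_apply, ← hi]
  · refine ⟨Pi.single i (-1), by simp [Pi.single_apply, apply_ite], ?_⟩
    simp [Pi.single_apply, ← hi]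

theorem circulant_exists_walk_add_mul (hg₀ : ∀ i, (g i : ZMod n) ≠ 0) (u : ZMod n)
    (i : Fin f) (k : ℤ) :
    ∃ p : (circulant n g).Walk u (u + ((k * g i : ℤ) : ZMod n)), p.length = k.natAbs := by
  induction k using Int.induction_on with
  | zero => exact ⟨Walk.nil.copy rfl (by simp), by simp⟩
  | succ k ih =>
    obtain ⟨p, hp⟩ := ih
    refine ⟨(p.concat (circulant_adj_sub_mul hg₀ _ i (Or.inr rfl))).copy rfl
      (by push_cast; ring), ?_⟩
    simp only [Walk.length_copy, Walk.length_concat, hp]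
    omega
  | pred k ih =>
    obtain ⟨p, hp⟩ := ih
    refine ⟨(p.concat (circulant_adj_sub_mul hg₀ _ i (Or.inl rfl))).copy rfl
      (by push_cast; ring), ?_⟩
    simp only [Walk.length_copy, Walk.length_concat, hp]
    omega

theorem circulant_exists_walk_add_sum (hg₀ : ∀ i, (g i : ZMod n) ≠ 0) (u : ZMod n)
    (x : Fin f → ℤ) (s : Finset (Fin f)) :
    ∃ p : (circulant n g).Walk u (u + ((∑ i ∈ s, x i * g i : ℤ) : ZMod n)),
      p.length ≤ ∑ i ∈ s, (x i).natAbs := by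
  classical
  induction s using Finset.induction_on with
  | empty => exact ⟨Walk.nil.copy rfl (by simp), by rw [Walk.length_copy]; simp⟩
  | insert a s ha ih =>
    obtain ⟨p, hp⟩ := ih
    obtain ⟨q, hq⟩ := circulant_exists_walk_add_mul hg₀ _ a (x a)
    refine ⟨(p.append q).copy rfl (by rw [Finset.sum_insert ha]; push_cast; ring), ?_⟩
    rw [Walk.length_copy, Walk.length_append, hq, Finset.sum_insert ha]
    omega

theorem circulant_dist_intCast_sum_le (hg₀ : ∀ i, (g i : ZMod n) ≠ 0) (x : Fin f → ℤ) :
    (circulant n g).dist 0 ((∑ i, x i * g i : ℤ) : ZMod n) ≤ ∑ i, (x i).natAbs := by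
  obtain ⟨p, hp⟩ := circulant_exists_walk_add_sum hg₀ 0 x Finset.univ
  simpa using (dist_le p).trans hp

theorem circulant_reachable_intCast_sum (hg₀ : ∀ i, (g i : ZMod n) ≠ 0) (x : Fin f → ℤ) :
    (circulant n g).Reachable 0 ((∑ i, x i * g i : ℤ) : ZMod n) := by
  obtain ⟨p, -⟩ := circulant_exists_walk_add_sum hg₀ 0 x Finset.univ
  simpa using p.reachable

theorem circulant_exists_sum_of_walk {u w : ZMod n} (p : (circulant n g).Walk u w) :
    ∃ x : Fin f → ℤ, ∑ i, (x i).natAbs ≤ p.length ∧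
      w = u + ((∑ i, x i * g i : ℤ) : ZMod n) := by
  induction p with
  | nil => exact ⟨0, by simp, by simp⟩
  | cons h p ih =>
    obtain ⟨x, hx, rfl⟩ := ih
    obtain ⟨y, hy, rfl⟩ := circulant_exists_step_of_adj h
    refine ⟨y + x, ?_, ?_⟩
    · calc ∑ i, ((y + x) i).natAbs ≤ ∑ i, ((y i).natAbs + (x i).natAbs) :=
            Finset.sum_le_sum fun i _ => Int.natAbs_add_le _ _
        _ ≤ (p.cons h).length := by
            rw [Finset.sum_add_distrib, hy, Walk.length_cons]; omega
    · simp only [Pi.add_apply, add_mul, Finset.sum_add_distrib, Int.cast_add]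
      ring

theorem circulant_exists_sum_le_dist {v : ZMod n} (hv : (circulant n g).Reachable 0 v) :
    ∃ x : Fin f → ℤ, v = ((∑ i, x i * g i : ℤ) : ZMod n) ∧
      ∑ i, (x i).natAbs ≤ (circulant n g).dist 0 v := by
  obtain ⟨p, hp⟩ := hv.exists_walk_length_eq_dist
  obtain ⟨x, hx, hvx⟩ := circulant_exists_sum_of_walk p
  exact ⟨x, by rw [hvx, zero_add], hp ▸ hx⟩

theorem circulant_exists_dist_sub_lt (hg₀ : ∀ i, (g i : ZMod n) ≠ 0) {v : ZMod n}
    {x : Fin f → ℤ} (hv : v = ((∑ i, x i * g i : ℤ) : ZMod n))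
    (hx : ∑ i, (x i).natAbs ≤ (circulant n g).dist 0 v) {k : Fin f} (hk : x k ≠ 0) :
    ∃ ε : ℤ, (ε = 1 ∨ ε = -1) ∧
      (circulant n g).dist 0 (v - ((ε * g k : ℤ) : ZMod n)) < (circulant n g).dist 0 v := by
  classical
  obtain ⟨ε, hε, hlt⟩ : ∃ ε : ℤ, (ε = 1 ∨ ε = -1) ∧ (x k - ε).natAbs < (x k).natAbs := by
    rcases lt_or_gt_of_ne hk with h | h
    exacts [⟨-1, Or.inr rfl, by omega⟩, ⟨1, Or.inl rfl, by omega⟩]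
  refine ⟨ε, hε, lt_of_lt_of_le ?_ hx⟩
  have hstep : v - ((ε * g k : ℤ) : ZMod n) =
      ((∑ i, (x - Pi.single k ε : Fin f → ℤ) i * g i : ℤ) : ZMod n) := by
    simp [hv, sub_mul, Finset.sum_sub_distrib, Pi.single_apply]
  rw [hstep]
  refine (circulant_dist_intCast_sum_le hg₀ _).trans_lt
    (Finset.sum_lt_sum (fun i _ => ?_) ⟨k, Finset.mem_univ _, by simpa using hlt⟩)
  rcases eq_or_ne i k with rfl | hik
  · simpa using hlt.le
  · simp [hik]

theorem circulant_ncard_parentSet_ne_one (hg₀ : ∀ i, (g i : ZMod n) ≠ 0)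
    (hg : ∀ i j, i ≠ j → (g i : ZMod n) ≠ g j ∧ (g i : ZMod n) ≠ -g j) {v : ZMod n}
    {x : Fin f → ℤ} (hv : v = ((∑ i, x i * g i : ℤ) : ZMod n))
    (hx : ∑ i, (x i).natAbs ≤ (circulant n g).dist 0 v) {i j : Fin f} (hij : i ≠ j)
    (hi : x i ≠ 0) (hj : x j ≠ 0) : ((circulant n g).parentSet 0 v).ncard ≠ 1 := by
  obtain ⟨ε, hε, hdi⟩ := circulant_exists_dist_sub_lt hg₀ hv hx hi
  obtain ⟨δ, hδ, hdj⟩ := circulant_exists_dist_sub_lt hg₀ hv hx hj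
  refine ncard_parentSet_ne_one (circulant_adj_sub_mul hg₀ v i hε)
    (circulant_adj_sub_mul hg₀ v j hδ) ?_ hdi hdj
  obtain ⟨h₁, h₂⟩ := hg i j hij
  rw [Ne, sub_right_inj]
  rcases hε with rfl | rfl <;> rcases hδ with rfl | rfl <;> simp [h₁, h₂, neg_eq_iff_eq_neg]

end Circulant

namespace LargeCirculant

def order (m : ℕ) : ℕ := 32*m^3+16*m^2+6*m+1

def genB (m : ℕ) : ℤ := 8*(m : ℤ)^2+2*m

def genC (m : ℕ) : ℤ := 8*(m : ℤ)^2+6*m+2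

def gens (m : ℕ) : Fin 3 → ℤ := ![1, genB m, genC m]

def graph (m : ℕ) : SimpleGraph (ZMod (order m)) := circulant (order m) (gens m)

variable {m : ℕ}

theorem order_eq_genB : (order m : ℤ) = 4*m*genB m + genC m - 1 := by
  simp only [order, genB, genC]; push_cast; ring

theorem order_eq_genC : (order m : ℤ) = 4*m*genC m - genB m + 1 := by
  simp only [order, genB, genC]; push_cast; ring

theorem abs_add_mul_genB_add_mul_genC_le (a b c : ℤ) :
    |a + b*genB m + c*genC m| ≤ (a.natAbs + b.natAbs + c.natAbs) * genC m := by
  have hB : 0 ≤ genB m := by unfold genB; positivity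
  have hBC : genB m ≤ genC m := by unfold genB genC; linarith
  have hC : 1 ≤ genC m := by unfold genC; nlinarith
  push_cast
  calc |a + b*genB m + c*genC m| ≤ |a| + |b| * genB m + |c| * genC m := by
        refine (abs_add_le _ _).trans (add_le_add ((abs_add_le _ _).trans ?_) ?_)
        · rw [abs_mul, abs_of_nonneg hB]
        · rw [abs_mul, abs_of_nonneg (show (0 : ℤ) ≤ genC m by linarith)]
    _ ≤ (|a| + |b| + |c|) * genC m := by
        nlinarith [abs_nonneg a, abs_nonneg b, abs_nonneg c]

theorem eq_of_add_mul_genB_add_mul_genC_eq (hm : 1 ≤ m) {a b c : ℤ}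
    (h : a + b*genB m + c*genC m = 2*m+1) (hn : a.natAbs + b.natAbs + c.natAbs ≤ 2*m+1) :
    a = 2*m+1 ∧ b = 0 ∧ c = 0 := by
  have hm' : (1 : ℤ) ≤ m := by exact_mod_cast hm
  obtain ⟨q, hq⟩ : ∃ q, q = 2*m*b + (2*m+1)*c := ⟨_, rfl⟩
  obtain ⟨t, ht⟩ : ∃ t, t = b + c := ⟨_, rfl⟩
  -- `genB m = 2m(4m+1)` and `genC m = (2m+1)(4m+1) + 1`
  have hsplit : (a + c) + (4*m+1) * q = 2*m+1 := by
    unfold genB genC at h; rw [hq]; linear_combination h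
  have hqt : 2*m*t = q - c := by rw [hq, ht]; ring
  have hac : |a + c| ≤ 2*m+1 := by rw [abs_le]; omega
  have hc : |c| ≤ 2*m+1 := by rw [abs_le]; omega
  rw [abs_le] at hac hc
  have hq0 : 0 ≤ q := by nlinarith
  have hq1 : q ≤ 1 := by nlinarith
  have ht₁ : -2 ≤ t := by nlinarith
  have ht₂ : t ≤ 2 := by nlinarith
  interval_cases q <;> interval_cases t <;> omega

theorem mul_genC_add_lt_order (hm : 1 ≤ m) : (2*m+1) * genC m + (2*m+1) < (order m : ℤ) := by
  have hm' : (1 : ℤ) ≤ m := by exact_mod_cast hm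
  rw [order_eq_genB]; unfold genB genC; nlinarith

theorem gens_mem_Icc (hm : 1 ≤ m) (i : Fin 3) : gens m i ∈ Set.Icc 1 (genC m) := by
  have hm' : (1 : ℤ) ≤ m := by exact_mod_cast hm
  fin_cases i <;> refine ⟨?_, ?_⟩ <;> simp [gens, genB, genC] <;> nlinarith

theorem gens_injective (hm : 1 ≤ m) : Function.Injective (gens m) := by
  have hm' : (1 : ℤ) ≤ m := by exact_mod_cast hm
  intro i j h
  fin_cases i <;> fin_cases j <;> simp [gens, genB, genC] at h ⊢ <;> nlinarith

theorem gens_ne_zero (hm : 1 ≤ m) (i : Fin 3) : ((gens m i : ℤ) : ZMod (order m)) ≠ 0 := by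
  obtain ⟨h₁, h₂⟩ := gens_mem_Icc hm i
  have := mul_genC_add_lt_order hm
  simpa using intCast_ne_intCast_of_abs_sub_lt (n := order m) (b := 0) (by omega)
    (by rw [sub_zero, abs_of_pos (by omega)]; nlinarith)

theorem gens_pairwise (hm : 1 ≤ m) (i j : Fin 3) (hij : i ≠ j) :
    ((gens m i : ℤ) : ZMod (order m)) ≠ gens m j ∧
      ((gens m i : ℤ) : ZMod (order m)) ≠ -gens m j := by
  obtain ⟨hi₁, hi₂⟩ := gens_mem_Icc hm i
  obtain ⟨hj₁, hj₂⟩ := gens_mem_Icc hm j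
  have : 2 * genC m < (order m : ℤ) := by nlinarith [mul_genC_add_lt_order hm]
  refine ⟨intCast_ne_intCast_of_abs_sub_lt ((gens_injective hm).ne hij) (by rw [abs_lt]; omega), ?_⟩
  rw [← Int.cast_neg]
  exact intCast_ne_intCast_of_abs_sub_lt (by omega) (by rw [abs_lt]; omega)

theorem sum_gens (x : Fin 3 → ℤ) : ∑ i, x i * gens m i = x 0 + x 1 * genB m + x 2 * genC m := by
  simp [Fin.sum_univ_three, gens]

theorem dist_intCast_le (hm : 1 ≤ m) (a b c : ℤ) :
    (graph m).dist 0 ((a + b*genB m + c*genC m : ℤ) : ZMod (order m)) ≤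
      a.natAbs + b.natAbs + c.natAbs := by
  have h := circulant_dist_intCast_sum_le (gens_ne_zero hm) ![a, b, c]
  rw [sum_gens] at h
  simpa [graph, Fin.sum_univ_three, add_assoc] using h

theorem reachable (hm : 1 ≤ m) (v : ZMod (order m)) : (graph m).Reachable 0 v := by
  simpa [graph, sum_gens] using circulant_reachable_intCast_sum (gens_ne_zero hm) ![v.cast, 0, 0]

theorem exists_repr (hm : 1 ≤ m) (v : ZMod (order m)) :
    ∃ a b c : ℤ, v = ((a + b*genB m + c*genC m : ℤ) : ZMod (order m)) ∧
      a.natAbs + b.natAbs + c.natAbs ≤ (graph m).dist 0 v := by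
  obtain ⟨x, hv, hx⟩ := circulant_exists_sum_le_dist (reachable hm v)
  refine ⟨x 0, x 1, x 2, by rw [hv, sum_gens], ?_⟩
  simpa [graph, Fin.sum_univ_three, add_assoc] using hx

theorem exists_step_of_adj {u w : ZMod (order m)} (h : (graph m).Adj u w) :
    ∃ a b c : ℤ, a.natAbs + b.natAbs + c.natAbs = 1 ∧
      w = u + ((a + b*genB m + c*genC m : ℤ) : ZMod (order m)) := by
  obtain ⟨x, hx, hw⟩ := circulant_exists_step_of_adj h
  exact ⟨x 0, x 1, x 2, by simpa [Fin.sum_univ_three, add_assoc] using hx, by rw [hw, sum_gens]⟩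

def HasMixedRepr (m : ℕ) (v : ZMod (order m)) (L : ℕ) : Prop :=
  ∃ a b c : ℤ, v = ((a + b*genB m + c*genC m : ℤ) : ZMod (order m)) ∧
    a.natAbs + b.natAbs + c.natAbs ≤ L ∧ (a ≠ 0 ∧ b ≠ 0 ∨ a ≠ 0 ∧ c ≠ 0 ∨ b ≠ 0 ∧ c ≠ 0)

theorem ncard_parentSet_ne_one_of_hasMixedRepr (hm : 1 ≤ m) {v : ZMod (order m)}
    (h : HasMixedRepr m v ((graph m).dist 0 v)) : ((graph m).parentSet 0 v).ncard ≠ 1 := by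
  obtain ⟨a, b, c, hv, hn, h₂⟩ := h
  have hv' : v = ((∑ i, ![a, b, c] i * gens m i : ℤ) : ZMod (order m)) := by
    rw [sum_gens]; simpa using hv
  have hn' : ∑ i, (![a, b, c] i).natAbs ≤ (graph m).dist 0 v := by
    simpa [Fin.sum_univ_three, add_assoc] using hn
  have key {i j : Fin 3} (hij : i ≠ j) :=
    circulant_ncard_parentSet_ne_one (gens_ne_zero hm) (gens_pairwise hm) hv' hn' hij
  rcases h₂ with ⟨ha, hb⟩ | ⟨ha, hc⟩ | ⟨hb, hc⟩
  exacts [key (i := 0) (j := 1) (by decide) ha hb, key (i := 0) (j := 2) (by decide) ha hc,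
    key (i := 1) (j := 2) (by decide) hb hc]

theorem hasMixedRepr_intCast {a : ℤ} {L : ℕ} (ha : a.natAbs = L) (hL : 2*m+2 ≤ L) :
    HasMixedRepr m (a : ZMod (order m)) L := by
  obtain ⟨ε, hε, rfl⟩ := Int.exists_eq_mul_of_natAbs_eq ha
  refine ⟨ε * (L - 4*m - 2), -ε, ε, ?_, ?_, ?_⟩
  · congr 1; unfold genB genC; ring
  · rcases hε with rfl | rfl <;> omega
  · rcases hε with rfl | rfl <;> simp

theorem hasMixedRepr_mul_genB (hm : 1 ≤ m) {b : ℤ} {L : ℕ} (hb : b.natAbs = L)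
    (hL : 2*m+1 ≤ L) : HasMixedRepr m ((b * genB m : ℤ) : ZMod (order m)) L := by
  obtain ⟨ε, hε, rfl⟩ := Int.exists_eq_mul_of_natAbs_eq hb
  refine ⟨ε, ε * (L - 4*m), -ε, ?_, ?_, ?_⟩
  · have h : ((order m : ℤ) : ZMod (order m)) = 0 := by simp
    rw [order_eq_genB] at h
    push_cast at h ⊢
    linear_combination (ε : ZMod (order m)) * h
  · rcases hε with rfl | rfl <;> omega
  · rcases hε with rfl | rfl <;> simp

theorem hasMixedRepr_mul_genC (hm : 1 ≤ m) {c : ℤ} {L : ℕ} (hc : c.natAbs = L)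
    (hL : 2*m+1 ≤ L) : HasMixedRepr m ((c * genC m : ℤ) : ZMod (order m)) L := by
  obtain ⟨ε, hε, rfl⟩ := Int.exists_eq_mul_of_natAbs_eq hc
  refine ⟨-ε, ε, ε * (L - 4*m), ?_, ?_, ?_⟩
  · have h : ((order m : ℤ) : ZMod (order m)) = 0 := by simp
    rw [order_eq_genC] at h
    push_cast at h ⊢
    linear_combination (ε : ZMod (order m)) * h
  · rcases hε with rfl | rfl <;> omega
  · rcases hε with rfl | rfl <;> simp

theorem hasMixedRepr_of_le_dist (hm : 1 ≤ m) {v : ZMod (order m)}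
    (hl : 2*m+1 ≤ (graph m).dist 0 v) (hv₁ : v ≠ ((2*m+1 : ℤ) : ZMod (order m)))
    (hv₂ : v ≠ ((-(2*m+1) : ℤ) : ZMod (order m))) : HasMixedRepr m v ((graph m).dist 0 v) := by
  obtain ⟨a, b, c, hv, hn⟩ := exists_repr hm v
  have hL := dist_intCast_le hm a b c
  rw [← hv] at hL
  obtain ⟨L, hLv⟩ : ∃ L, (graph m).dist 0 v = L := ⟨_, rfl⟩
  rw [hLv] at hl hn hL ⊢
  subst hv
  rcases eq_or_ne b 0 with rfl | hb
  · rcases eq_or_ne c 0 with rfl | hc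
    · simp only [zero_mul, add_zero, Int.natAbs_zero] at hv₁ hv₂ hn hL ⊢
      refine hasMixedRepr_intCast (by omega) ?_
      by_contra hL'
      rcases Int.natAbs_eq_iff.mp (show a.natAbs = 2*m+1 by omega) with rfl | rfl
      exacts [hv₁ (by push_cast; ring), hv₂ (by push_cast; ring)]
    · rcases eq_or_ne a 0 with rfl | ha
      · simpa using hasMixedRepr_mul_genC hm (c := c) (by omega) hl
      · exact ⟨a, 0, c, rfl, hn, Or.inr (Or.inl ⟨ha, hc⟩)⟩
  · rcases eq_or_ne a 0 with rfl | ha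
    · rcases eq_or_ne c 0 with rfl | hc
      · simpa using hasMixedRepr_mul_genB hm (b := b) (by omega) hl
      · exact ⟨0, b, c, rfl, hn, Or.inr (Or.inr ⟨hb, hc⟩)⟩
    · exact ⟨a, b, c, rfl, hn, Or.inl ⟨ha, hb⟩⟩

theorem eq_of_intCast_eq_mul_two_mul_add_one (hm : 1 ≤ m) {ε : ℤ} (hε : ε = 1 ∨ ε = -1)
    {a b c : ℤ}
    (h : ((a + b*genB m + c*genC m : ℤ) : ZMod (order m)) = ((ε*(2*m+1) : ℤ) : ZMod (order m)))
    (hn : a.natAbs + b.natAbs + c.natAbs ≤ 2*m+1) : a = ε*(2*m+1) ∧ b = 0 ∧ c = 0 := by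
  have hZ : a + b*genB m + c*genC m = ε*(2*m+1) := by
    refine eq_of_intCast_eq_of_abs_sub_lt h ?_
    have hn' : (a.natAbs + b.natAbs + c.natAbs : ℤ) ≤ 2*m+1 := by exact_mod_cast hn
    have hC : 0 ≤ genC m := by unfold genC; positivity
    have := (abs_add_mul_genB_add_mul_genC_le (m := m) a b c).trans
      (mul_le_mul_of_nonneg_right hn' hC)
    have := mul_genC_add_lt_order hm
    rw [abs_le] at *
    rw [abs_lt]
    rcases hε with rfl | rfl <;> constructor <;> linarith
  rcases hε with rfl | rfl
  · simpa using eq_of_add_mul_genB_add_mul_genC_eq hm (by linarith) hn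
  · have := eq_of_add_mul_genB_add_mul_genC_eq hm (a := -a) (b := -b) (c := -c)
      (by linarith) (by simpa using hn)
    omega

theorem dist_mul_two_mul_add_one (hm : 1 ≤ m) {ε : ℤ} (hε : ε = 1 ∨ ε = -1) :
    (graph m).dist 0 ((ε*(2*m+1) : ℤ) : ZMod (order m)) = 2*m+1 := by
  refine le_antisymm ?_ (not_lt.mp fun hlt => ?_)
  · simpa using (dist_intCast_le hm (ε*(2*m+1)) 0 0).trans (by rcases hε with rfl | rfl <;> omega)
  · obtain ⟨a, b, c, hv, hn⟩ := exists_repr hm ((ε*(2*m+1) : ℤ) : ZMod (order m))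
    obtain ⟨ha, -, -⟩ := eq_of_intCast_eq_mul_two_mul_add_one hm hε hv.symm (by omega)
    rcases hε with rfl | rfl <;> omega

theorem parentSet_mul_two_mul_add_one (hm : 1 ≤ m) {ε : ℤ} (hε : ε = 1 ∨ ε = -1) :
    (graph m).parentSet 0 ((ε*(2*m+1) : ℤ) : ZMod (order m)) =
      {((ε*(2*m) : ℤ) : ZMod (order m))} := by
  ext u
  refine ⟨fun ⟨hadj, hd⟩ => ?_, fun hu => ?_⟩
  · rw [dist_mul_two_mul_add_one hm hε] at hd
    obtain ⟨x, y, z, hs, rfl⟩ := exists_step_of_adj hadj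
    obtain ⟨a, b, c, hu, hn⟩ := exists_repr hm
      (((ε*(2*m+1) : ℤ) : ZMod (order m)) + ((x + y*genB m + z*genC m : ℤ) : ZMod (order m)))
    obtain ⟨ha, hb, hc⟩ := eq_of_intCast_eq_mul_two_mul_add_one hm hε
      (a := a - x) (b := b - y) (c := c - z) (by push_cast at hu ⊢; linear_combination -hu)
      (by omega)
    obtain ⟨rfl, rfl, rfl⟩ : x = -ε ∧ y = 0 ∧ z = 0 := by rcases hε with rfl | rfl <;> omega
    rw [Set.mem_singleton_iff]
    push_cast
    ring
  · rw [Set.mem_singleton_iff] at hu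
    subst hu
    refine mem_parentSet_of_adj_of_dist_lt ?_ ?_
    · have h := circulant_adj_sub_mul (gens_ne_zero hm) ((ε*(2*m+1) : ℤ) : ZMod (order m)) 0 hε
      rwa [show ((ε*(2*m+1) : ℤ) : ZMod (order m)) - ((ε * gens m 0 : ℤ) : ZMod (order m)) =
        ((ε*(2*m) : ℤ) : ZMod (order m)) by simp [gens]; ring] at h
    · rw [dist_mul_two_mul_add_one hm hε]
      have h := dist_intCast_le hm (ε*(2*m)) 0 0
      simp only [zero_mul, add_zero, Int.natAbs_zero] at h
      have : (ε*(2*m)).natAbs = 2*m := by rcases hε with rfl | rfl <;> omega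
      omega

theorem dist_eq_and_ncard_parentSet_eq_one (hm : 1 ≤ m) {v : ZMod (order m)}
    (hv : v = ((2*m+1 : ℤ) : ZMod (order m)) ∨ v = ((-(2*m+1) : ℤ) : ZMod (order m))) :
    (graph m).dist 0 v = 2*m+1 ∧ ((graph m).parentSet 0 v).ncard = 1 := by
  obtain ⟨ε, hε, rfl⟩ : ∃ ε : ℤ, (ε = 1 ∨ ε = -1) ∧ v = ((ε*(2*m+1) : ℤ) : ZMod (order m)) := by
    rcases hv with rfl | rfl
    exacts [⟨1, Or.inl rfl, by rw [one_mul]⟩, ⟨-1, Or.inr rfl, by rw [neg_one_mul]⟩]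
  exact ⟨dist_mul_two_mul_add_one hm hε,
    by rw [parentSet_mul_two_mul_add_one hm hε, Set.ncard_singleton]⟩

theorem intCast_two_mul_add_one_ne_neg (hm : 1 ≤ m) :
    ((2*m+1 : ℤ) : ZMod (order m)) ≠ ((-(2*m+1) : ℤ) : ZMod (order m)) := by
  have := mul_genC_add_lt_order hm
  have hC : 2 ≤ genC m := by
    unfold genC; nlinarith [sq_nonneg (m : ℤ), (m.cast_nonneg : (0 : ℤ) ≤ m)]
  exact intCast_ne_intCast_of_abs_sub_lt (by omega) (by rw [abs_lt]; constructor <;> nlinarith)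

end LargeCirculant

/-- In the largest known circulant graph of degree 6 and diameter `k = 3m` (isomorphism
class 2; order `n = 32m³+16m²+6m+1`, generators `1`, `8m²+2m`, `8m²+6m+2`), the type
`T₁` vertices at distance exactly `2m+1` from `0` are precisely the two distinct
vertices `±(2m+1)`, and there are no type `T₁` vertices at any distance `l ≥ 2m+2`. -/
theorem stmt19 (m : ℕ) (hm : 1 ≤ m) :
    let n : ℕ := 32*m^3+16*m^2+6*m+1
    let X := circulant n ![(1 : ℤ), 8*(m : ℤ)^2+2*m, 8*(m : ℤ)^2+6*m+2]
    let T1 : ZMod n → Prop := fun v =>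
      {u : ZMod n | X.Adj v u ∧ X.dist 0 u = X.dist 0 v - 1}.ncard = 1
    ({v : ZMod n | X.dist 0 v = 2*m+1 ∧ T1 v} =
      {((2*(m : ℤ)+1 : ℤ) : ZMod n), ((-(2*(m : ℤ)+1) : ℤ) : ZMod n)}) ∧
    ({((2*(m : ℤ)+1 : ℤ) : ZMod n), ((-(2*(m : ℤ)+1) : ℤ) : ZMod n)} : Set (ZMod n)).ncard = 2 ∧
    (∀ l, 2*m+2 ≤ l → ∀ v : ZMod n, X.dist 0 v = l → ¬ T1 v) := by
  intro n X T1
  have hT1 (v : ZMod n) (hv : v = ((2*m+1 : ℤ) : ZMod n) ∨ v = ((-(2*m+1) : ℤ) : ZMod n)) :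
      X.dist 0 v = 2*m+1 ∧ T1 v :=
    LargeCirculant.dist_eq_and_ncard_parentSet_eq_one hm hv
  have hnot (v : ZMod n) (hl : 2*m+1 ≤ X.dist 0 v) (hv₁ : v ≠ ((2*m+1 : ℤ) : ZMod n))
      (hv₂ : v ≠ ((-(2*m+1) : ℤ) : ZMod n)) : ¬ T1 v :=
    LargeCirculant.ncard_parentSet_ne_one_of_hasMixedRepr hm
      (LargeCirculant.hasMixedRepr_of_le_dist hm hl hv₁ hv₂)
  refine ⟨?_, Set.ncard_pair (LargeCirculant.intCast_two_mul_add_one_ne_neg hm), ?_⟩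
  · ext v
    refine ⟨fun ⟨hd, hT⟩ => by_contra fun hv => ?_, hT1 v⟩
    simp only [Set.mem_insert_iff, Set.mem_singleton_iff, not_or] at hv
    exact hnot v hd.ge hv.1 hv.2 hT
  · rintro l hl v rfl
    refine hnot v (by omega) ?_ ?_ <;> rintro rfl
    exacts [by have := (hT1 _ (Or.inl rfl)).1; omega, by have := (hT1 _ (Or.inr rfl)).1; omega]
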